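/- arXiv:2002.04388 — 6 statements merged into one kernel-verified Lean document; each statement's English description precedes it below -/
import Mathlib

section
/- Let T > 0, n, k ∈ ℕ, x : [0, T] → ℝ^n, z : [0, T] → ℝ^k measurable, z̄ ∈ ℝ^k, and let α : [0, ∞) → [0, ∞) be continuous and strictly increasing with α(0) = 0. Let S : ℝ^n → ℝ satisfy 0 ≤ S(x) ≤ Ŝ for all x (bounded non-negative storage) and let w : [0, T] → ℝ be integrable with ∫₀^T w(t) dt ≤ C. Assume the strict dissipation inequality S(x(T)) − S(x(0)) ≤ ∫₀^T ( −α(‖z(t) − z̄‖) + w(t) ) dt holds and that t ↦ α(‖z(t) − z̄‖) is integrable. Then for every ε > 0, μ({ t ∈ [0, T] : ‖z(t) − z̄‖ > ε }) ≤ (2Ŝ + C) / α(ε), where μ is Lebesgue measure. (Proposition 1: strict dissipativity with bounded storage and bounded optimal cost implies the measure-based velocity turnpike bound.) -/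
open MeasureTheory

/-- Proposition 1: strict dissipativity with bounded non-negative
storage and bounded cost implies the measure-based velocity turnpike bound
`μ(Θ_T(ε)) ≤ (2Ŝ + C)/α(ε)`. -/
theorem velocity_turnpike_of_strict_dissipativity
    (T : ℝ) (hT : 0 < T) (n k : ℕ)
    (x : ℝ → EuclideanSpace ℝ (Fin n))
    (z : ℝ → EuclideanSpace ℝ (Fin k)) (hz : Measurable z)
    (zbar : EuclideanSpace ℝ (Fin k))
    (α : ℝ → ℝ)
    (hαc : ContinuousOn α (Set.Ici (0 : ℝ)))
    (hαm : StrictMonoOn α (Set.Ici (0 : ℝ)))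
    (hα0 : α 0 = 0)
    (hα_nonneg : ∀ r ∈ Set.Ici (0 : ℝ), 0 ≤ α r)
    (S : EuclideanSpace ℝ (Fin n) → ℝ) (Shat : ℝ)
    (hS : ∀ y, 0 ≤ S y ∧ S y ≤ Shat)
    (w : ℝ → ℝ) (C : ℝ)
    (hw : IntegrableOn w (Set.Icc (0 : ℝ) T))
    (hwC : ∫ t in Set.Icc (0 : ℝ) T, w t ≤ C)
    (hint : IntegrableOn (fun t => α ‖z t - zbar‖) (Set.Icc (0 : ℝ) T))
    (hdiss : S (x T) - S (x 0) ≤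
      ∫ t in Set.Icc (0 : ℝ) T, (-α ‖z t - zbar‖ + w t)) :
    ∀ ε > (0 : ℝ),
      (volume {t ∈ Set.Icc (0 : ℝ) T | ε < ‖z t - zbar‖}).toReal ≤
        (2 * Shat + C) / α ε := by
  intro ε hε
  set f : ℝ → ℝ := fun t => α ‖z t - zbar‖ with hf
  have hαε : 0 < α ε := by
    have := hαm (Set.self_mem_Ici) (le_of_lt hε) hε
    rwa [hα0] at this
  -- integral bound
  have hsplit : ∫ t in Set.Icc (0 : ℝ) T, (-f t + w t)
      = -(∫ t in Set.Icc (0 : ℝ) T, f t) + ∫ t in Set.Icc (0 : ℝ) T, w t := by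
    have h := integral_add hint.neg hw
    simpa [integral_neg] using h
  have hIf : ∫ t in Set.Icc (0 : ℝ) T, f t ≤ 2 * Shat + C := by
    have h1 := hdiss
    rw [hsplit] at h1
    have h2 : 0 ≤ S (x T) := (hS (x T)).1
    have h3 : S (x 0) ≤ Shat := (hS (x 0)).2
    have h4 : 0 ≤ Shat := le_trans (hS (x 0)).1 h3
    nlinarith
  -- Markov
  have hmeas : MeasurableSet {t : ℝ | ε < ‖z t - zbar‖} := by
    have : Measurable fun t => ‖z t - zbar‖ := (hz.sub measurable_const).norm
    exact measurableSet_lt measurable_const this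
  have hsubset : {t : ℝ | ε < ‖z t - zbar‖} ⊆ {t : ℝ | α ε ≤ f t} := by
    intro t ht
    exact le_of_lt (hαm (le_of_lt hε) (norm_nonneg _) ht)
  have hnn : 0 ≤ᵐ[volume.restrict (Set.Icc (0 : ℝ) T)] f :=
    Filter.Eventually.of_forall fun t => hα_nonneg _ (norm_nonneg _)
  have hmarkov := mul_meas_ge_le_integral_of_nonneg hnn hint (α ε)
  have hEset : {t ∈ Set.Icc (0 : ℝ) T | ε < ‖z t - zbar‖}
      = Set.Icc (0 : ℝ) T ∩ {t : ℝ | ε < ‖z t - zbar‖} := by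
    ext t; simp [Set.mem_setOf_eq, Set.mem_inter_iff, and_comm]
  have hvol : volume {t ∈ Set.Icc (0 : ℝ) T | ε < ‖z t - zbar‖}
      ≤ (volume.restrict (Set.Icc (0 : ℝ) T)) {t : ℝ | α ε ≤ f t} := by
    rw [hEset, Measure.restrict_apply' measurableSet_Icc]
    exact measure_mono (by
      intro t ht
      exact ⟨hsubset ht.2, ht.1⟩)
  have hfin : (volume.restrict (Set.Icc (0 : ℝ) T)) {t : ℝ | α ε ≤ f t} < ⊤ :=
    lt_of_le_of_lt (measure_mono (Set.subset_univ _))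
      (by rw [Measure.restrict_apply_univ]; exact measure_Icc_lt_top)
  have htoReal : (volume {t ∈ Set.Icc (0 : ℝ) T | ε < ‖z t - zbar‖}).toReal
      ≤ ((volume.restrict (Set.Icc (0 : ℝ) T)) {t : ℝ | α ε ≤ f t}).toReal :=
    ENNReal.toReal_mono hfin.ne hvol
  rw [le_div_iff₀ hαε]
  calc (volume {t ∈ Set.Icc (0 : ℝ) T | ε < ‖z t - zbar‖}).toReal * α ε
      ≤ α ε * ((volume.restrict (Set.Icc (0 : ℝ) T)) {t : ℝ | α ε ≤ f t}).toReal := by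
        rw [mul_comm]; exact mul_le_mul_of_nonneg_left htoReal (le_of_lt hαε)
    _ ≤ ∫ t in Set.Icc (0 : ℝ) T, f t := hmarkov
    _ ≤ 2 * Shat + C := hIf
end

section
/- Let d, m ∈ ℕ, let f : ℝ^d × ℝ^m → ℝ^d and ℓ : ℝ^d × ℝ^m → ℝ be differentiable, and let v, u, λ_q, λ_v be differentiable functions on [0, T] with values in ℝ^d, ℝ^m, ℝ^d, ℝ^d respectively satisfying the adjoint equations λ_q'(t) = 0 and λ_v'(t) = −∂ℓ/∂v(v(t), u(t)) − λ_q(t) − (∂f/∂v(v(t), u(t)))ᵀ λ_v(t) and the optimality condition 0 = ∂ℓ/∂u(v(t), u(t)) + (∂f/∂u(v(t), u(t)))ᵀ λ_v(t) for all t ∈ [0, T]. Suppose λ_q(t_i) = 0 for some t_i ∈ [0, T], and suppose λ_v(t) = λ is constant on a subinterval [t₁, t₂] ⊆ [0, T] with t₁ < t₂. Then λ_q(t) = 0 for all t ∈ [0, T], and for all t ∈ (t₁, t₂): 0 = ∂ℓ/∂v(v(t), u(t)) + (∂f/∂v(v(t), u(t)))ᵀ λ and 0 = ∂ℓ/∂u(v(t),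 u(t)) + (∂f/∂u(v(t), u(t)))ᵀ λ, i.e. the necessary optimality conditions of the optimal control problem reduce to the Karush–Kuhn–Tucker conditions of the velocity steady state optimization problem with constant multiplier λ. (Proposition 2.) -/
open Set

/-! On `[0, T]` the adjoint `λ_q` has zero derivative, so it is constant and hence equal to its
value `0` at `t_i`. On the open interval `(t₁, t₂)` the adjoint `λ_v` is locally constant, so its
derivative vanishes there; the adjoint equation for `λ_v`, with `λ_q = 0` and `λ_v = λ`, becomes the
KKT condition in `v`, and the stationarity condition with `λ_v = λ` is the KKT condition in `u`. -/

section

variable {E : Type*} [NormedAddCommGroup E] [NormedSpace ℝ E]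

theorem eq_of_hasDerivAt_zero_on_Icc {g : ℝ → E} {a b : ℝ}
    (hg : ∀ t ∈ Icc a b, HasDerivAt g 0 t) {x y : ℝ} (hx : x ∈ Icc a b) (hy : y ∈ Icc a b) :
    g x = g y := by
  have hconst : ∀ t ∈ Icc a b, g t = g a :=
    constant_of_has_deriv_right_zero (fun t ht => (hg t ht).continuousAt.continuousWithinAt)
      fun t ht => (hg t (Ico_subset_Icc_self ht)).hasDerivWithinAt
  rw [hconst x hx, hconst y hy]

theorem HasDerivAt.eq_zero_of_eqOn_Ioo {g : ℝ → E} {g' c : E} {a b t : ℝ}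
    (hg : HasDerivAt g g' t) (hc : ∀ s ∈ Ioo a b, g s = c) (ht : t ∈ Ioo a b) : g' = 0 := by
  have hc_nhds : g =ᶠ[nhds t] fun _ => c :=
    Filter.eventually_of_mem (Ioo_mem_nhds ht.1 ht.2) hc
  exact hg.unique ((hasDerivAt_const t c).congr_of_eventuallyEq hc_nhds)

end

theorem pmp_reduces_to_kkt_general
    (d m : ℕ) (T : ℝ)
    (f : EuclideanSpace ℝ (Fin d) → EuclideanSpace ℝ (Fin m) → EuclideanSpace ℝ (Fin d))
    (ℓ : EuclideanSpace ℝ (Fin d) → EuclideanSpace ℝ (Fin m) → ℝ)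
    (v lamq lamv : ℝ → EuclideanSpace ℝ (Fin d))
    (u : ℝ → EuclideanSpace ℝ (Fin m))
    -- adjoint equation λ_q' = 0
    (hlamq : ∀ t ∈ Icc (0 : ℝ) T, HasDerivAt lamq 0 t)
    -- adjoint equation λ_v' = −∂ℓ/∂v − λ_q − (∂f/∂v)ᵀ λ_v
    (hlamv : ∀ t ∈ Icc (0 : ℝ) T, HasDerivAt lamv
      (-(gradient (fun v' => ℓ v' (u t)) (v t)) - lamq t -
        (ContinuousLinearMap.adjoint (fderiv ℝ (fun v' => f v' (u t)) (v t))) (lamv t)) t)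
    -- stationarity condition 0 = ∂ℓ/∂u + (∂f/∂u)ᵀ λ_v
    (hopt : ∀ t ∈ Icc (0 : ℝ) T,
      gradient (fun u' => ℓ (v t) u') (u t) +
        (ContinuousLinearMap.adjoint (fderiv ℝ (fun u' => f (v t) u') (u t))) (lamv t) = 0)
    -- λ_q vanishes at some time t_i ∈ [0, T]
    (ti : ℝ) (hti : ti ∈ Icc (0 : ℝ) T) (hlamq_ti : lamq ti = 0)
    -- λ_v ≡ λ constant on a subinterval [t₁, t₂] ⊆ [0, T]
    (t₁ t₂ : ℝ) (hsub : Icc t₁ t₂ ⊆ Icc (0 : ℝ) T)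
    (lam : EuclideanSpace ℝ (Fin d))
    (hconst : ∀ t ∈ Icc t₁ t₂, lamv t = lam) :
    (∀ t ∈ Icc (0 : ℝ) T, lamq t = 0) ∧
    (∀ t ∈ Ioo t₁ t₂,
      gradient (fun v' => ℓ v' (u t)) (v t) +
        (ContinuousLinearMap.adjoint (fderiv ℝ (fun v' => f v' (u t)) (v t))) lam = 0 ∧
      gradient (fun u' => ℓ (v t) u') (u t) +
        (ContinuousLinearMap.adjoint (fderiv ℝ (fun u' => f (v t) u') (u t))) lam = 0) := by
  have hlamq_zero : ∀ t ∈ Icc (0 : ℝ) T, lamq t = 0 := fun t ht =>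
    (eq_of_hasDerivAt_zero_on_Icc hlamq ht hti).trans hlamq_ti
  refine ⟨hlamq_zero, fun t ht => ?_⟩
  have ht_Icc : t ∈ Icc t₁ t₂ := Ioo_subset_Icc_self ht
  have hlamv_deriv_zero := (hlamv t (hsub ht_Icc)).eq_zero_of_eqOn_Ioo
    (fun s hs => hconst s (Ioo_subset_Icc_self hs)) ht
  rw [hlamq_zero t (hsub ht_Icc), hconst t ht_Icc] at hlamv_deriv_zero
  refine ⟨?_, hconst t ht_Icc ▸ hopt t (hsub ht_Icc)⟩
  linear_combination (norm := abel) -hlamv_deriv_zero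

/-- Proposition 2: if the adjoint `λ_q` vanishes at some time and the
adjoint `λ_v` is constant on a subinterval `[t₁, t₂]`, then the necessary optimality
conditions of the OCP reduce, on `(t₁, t₂)`, to the KKT conditions of the velocity
steady state optimization problem with constant multiplier `λ`. -/
theorem pmp_reduces_to_kkt
    (d m : ℕ) (T : ℝ) (hT : 0 < T)
    (f : EuclideanSpace ℝ (Fin d) → EuclideanSpace ℝ (Fin m) → EuclideanSpace ℝ (Fin d))
    (ℓ : EuclideanSpace ℝ (Fin d) → EuclideanSpace ℝ (Fin m) → ℝ)
    (hf : Differentiable ℝ (fun p : EuclideanSpace ℝ (Fin d) × EuclideanSpace ℝ (Fin m) => f p.1 p.2))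
    (hℓ : Differentiable ℝ (fun p : EuclideanSpace ℝ (Fin d) × EuclideanSpace ℝ (Fin m) => ℓ p.1 p.2))
    (v lamq lamv : ℝ → EuclideanSpace ℝ (Fin d))
    (u : ℝ → EuclideanSpace ℝ (Fin m))
    (hv : Differentiable ℝ v) (hu : Differentiable ℝ u)
    (hlamq_diff : Differentiable ℝ lamq) (hlamv_diff : Differentiable ℝ lamv)
    -- adjoint equation λ_q' = 0
    (hlamq : ∀ t ∈ Icc (0 : ℝ) T, HasDerivAt lamq 0 t)
    -- adjoint equation λ_v' = −∂ℓ/∂v − λ_q − (∂f/∂v)ᵀ λ_v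
    (hlamv : ∀ t ∈ Icc (0 : ℝ) T, HasDerivAt lamv
      (-(gradient (fun v' => ℓ v' (u t)) (v t)) - lamq t -
        (ContinuousLinearMap.adjoint (fderiv ℝ (fun v' => f v' (u t)) (v t))) (lamv t)) t)
    -- stationarity condition 0 = ∂ℓ/∂u + (∂f/∂u)ᵀ λ_v
    (hopt : ∀ t ∈ Icc (0 : ℝ) T,
      gradient (fun u' => ℓ (v t) u') (u t) +
        (ContinuousLinearMap.adjoint (fderiv ℝ (fun u' => f (v t) u') (u t))) (lamv t) = 0)
    -- λ_q vanishes at some time t_i ∈ [0, T]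
    (ti : ℝ) (hti : ti ∈ Icc (0 : ℝ) T) (hlamq_ti : lamq ti = 0)
    -- λ_v ≡ λ constant on a subinterval [t₁, t₂] ⊆ [0, T]
    (t₁ t₂ : ℝ) (ht₁₂ : t₁ < t₂) (hsub : Icc t₁ t₂ ⊆ Icc (0 : ℝ) T)
    (lam : EuclideanSpace ℝ (Fin d))
    (hconst : ∀ t ∈ Icc t₁ t₂, lamv t = lam) :
    (∀ t ∈ Icc (0 : ℝ) T, lamq t = 0) ∧
    (∀ t ∈ Ioo t₁ t₂,
      gradient (fun v' => ℓ v' (u t)) (v t) +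
        (ContinuousLinearMap.adjoint (fderiv ℝ (fun v' => f v' (u t)) (v t))) lam = 0 ∧
      gradient (fun u' => ℓ (v t) u') (u t) +
        (ContinuousLinearMap.adjoint (fderiv ℝ (fun u' => f (v t) u') (u t))) lam = 0) :=
  pmp_reduces_to_kkt_general d m T f ℓ v lamq lamv u hlamq hlamv hopt ti hti hlamq_ti t₁ t₂ hsub lam
    hconst
end

section
/- Let A be the real 4×4 matrix with rows (0, 1, 0, 0), (0, 0, 0, −1), (0, 0, 0, 0), (0, −1, −1, 0). Then for every t ∈ ℝ, the matrix exponential exp(t A) equals the 4×4 matrix with rows (1, sinh t, sinh t − t, 1 − cosh t), (0, cosh t, cosh t − 1, −sinh t), (0, 0, 1, 0), (0, −sinh t, −sinh t, cosh t). (Explicit solution of the state–adjoint system of the double integrator optimal control problem.) -/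
/-!
Since `A ^ 4 = A ^ 2`, the exponential series collapses to
`exp (t • A) = 1 + t • A + (cosh t - 1) • A ^ 2 + (sinh t - t) • A ^ 3`. Rather than summing
the series, we check that the right-hand side `F` solves `F' = A F` with `F 0 = 1`;
then `exp (-s • A) * F s` has zero derivative, so `F t = exp (t • A)`.
-/

open Real

open NormedSpace in
theorem eq_exp_smul_mul_of_hasDerivAt {𝔸 : Type*} [NormedRing 𝔸] [NormedAlgebra ℝ 𝔸]
    [CompleteSpace 𝔸] {A : 𝔸} {F : ℝ → 𝔸} (hF : ∀ t, HasDerivAt F (A * F t) t) (t : ℝ) :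
    F t = exp (t • A) * F 0 := by
  have hG : ∀ s, HasDerivAt (fun s : ℝ => exp (s • -A) * F s) 0 s := fun s => by
    refine ((hasDerivAt_exp_smul_const' (-A) s).fun_mul (hF s)).congr_deriv ?_
    rw [← mul_assoc, ← ((Commute.refl A).neg_right.smul_right s).exp_right.eq]
    noncomm_ring
  have hconst : exp (t • -A) * F t = F 0 := by
    simpa using is_const_of_deriv_eq_zero (fun s => (hG s).differentiableAt)
      (fun s => (hG s).deriv) t 0
  let +nondep : NormedAlgebra ℚ 𝔸 := .restrictScalars ℚ ℝ 𝔸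
  rw [← hconst, ← mul_assoc,
    ← exp_add_of_commute (((Commute.refl A).smul_left t).neg_right.smul_right t),
    smul_neg, add_neg_cancel, NormedSpace.exp_zero, one_mul]

open NormedSpace in
theorem exp_smul_eq_of_pow_four_eq_sq {𝔸 : Type*} [NormedRing 𝔸] [NormedAlgebra ℝ 𝔸]
    [CompleteSpace 𝔸] {A : 𝔸} (hA : A ^ 4 = A ^ 2) (t : ℝ) :
    exp (t • A) = 1 + t • A + (cosh t - 1) • A ^ 2 + (sinh t - t) • A ^ 3 := by
  set F : ℝ → 𝔸 := fun t => 1 + t • A + (cosh t - 1) • A ^ 2 + (sinh t - t) • A ^ 3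
  have hF : ∀ t, HasDerivAt F (A * F t) t := fun t => by
    refine (((((hasDerivAt_id t).smul_const A).const_add 1).add
      (((hasDerivAt_cosh t).sub_const 1).smul_const (A ^ 2))).add
      (((hasDerivAt_sinh t).sub (hasDerivAt_id t)).smul_const (A ^ 3))).congr_deriv ?_
    simp only [F, mul_add, mul_one, mul_smul_comm, ← sq, ← pow_succ', hA]
    simp only [one_smul, sub_smul]
    abel
  simpa [F] using (eq_exp_smul_mul_of_hasDerivAt hF t).symm

/-- explicit matrix exponential of the state–adjoint system of the
double integrator optimal control problem. -/
theorem double_integrator_state_adjoint_exp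
    (A : Matrix (Fin 4) (Fin 4) ℝ)
    (hA : A = !![0, 1, 0, 0; 0, 0, 0, -1; 0, 0, 0, 0; 0, -1, -1, 0]) :
    ∀ t : ℝ,
      NormedSpace.exp (t • A) =
        !![1, sinh t, sinh t - t, 1 - cosh t;
           0, cosh t, cosh t - 1, -sinh t;
           0, 0, 1, 0;
           0, -sinh t, -sinh t, cosh t] := by
  intro t
  have hA2 : A ^ 2 = !![0, 0, 0, -1; 0, 1, 1, 0; 0, 0, 0, 0; 0, 0, 0, 1] := by
    rw [hA, sq]
    ext i j; fin_cases i <;> fin_cases j <;> simp [Matrix.mul_apply, Fin.sum_univ_four]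
  have hA3 : A ^ 3 = !![0, 1, 1, 0; 0, 0, 0, -1; 0, 0, 0, 0; 0, -1, -1, 0] := by
    rw [pow_succ, hA2, hA]
    ext i j; fin_cases i <;> fin_cases j <;> simp [Matrix.mul_apply, Fin.sum_univ_four]
  have hA4 : A ^ 4 = A ^ 2 := by
    rw [pow_succ, hA3, hA2, hA]
    ext i j; fin_cases i <;> fin_cases j <;> simp [Matrix.mul_apply, Fin.sum_univ_four]
  refine (open scoped Matrix.Norms.Operator in exp_smul_eq_of_pow_four_eq_sq hA4 t).trans ?_
  rw [hA3, hA2, hA]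
  ext i j; fin_cases i <;> fin_cases j <;> simp <;> ring
end

section
/- Let T > 0 and q₀, v₀, q_T, v_T ∈ ℝ. Define λ_q0 := (sinh T · (q_T − q₀) + (1 − cosh T)(v₀ + v_T)) / (2(cosh T − 1) − T sinh T) and λ_v0 := (cosh T · v₀ − v_T + (cosh T − 1) λ_q0) / sinh T. Define q⋆(t) := q₀ + sinh t · v₀ + (sinh t − t) λ_q0 + (1 − cosh t) λ_v0 and v⋆(t) := cosh t · v₀ + (cosh t − 1) λ_q0 − sinh t · λ_v0. Then q⋆(T) = q_T and v⋆(T) = v_T. (The explicit initial adjoint values enforce the boundary conditions of the double integrator optimal control problem.) -/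
open Real

lemma sinh_lt_mul_cosh {x : ℝ} (hx : 0 < x) : sinh x < x * cosh x := by
  have h : StrictMonoOn (fun y : ℝ => y * cosh y - sinh y) (Set.Ici 0) := by
    apply strictMonoOn_of_deriv_pos (convex_Ici 0)
    · exact ((continuous_id.mul Real.continuous_cosh).sub Real.continuous_sinh).continuousOn
    · intro y hy
      rw [interior_Ici, Set.mem_Ioi] at hy
      have hd : HasDerivAt (fun y : ℝ => y * cosh y - sinh y)
          (1 * cosh y + y * sinh y - cosh y) y :=
        ((hasDerivAt_id y).mul (Real.hasDerivAt_cosh y)).sub (Real.hasDerivAt_sinh y)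
      rw [hd.deriv]
      have : 0 < y * sinh y := mul_pos hy (Real.sinh_pos_iff.mpr hy)
      linarith
  have := h Set.self_mem_Ici (Set.mem_Ici.mpr hx.le) hx
  simpa using this

/-- the explicit initial adjoint values enforce the boundary conditions
of the double integrator optimal control problem: `q⋆(T) = q_T` and `v⋆(T) = v_T`. -/
theorem double_integrator_boundary_conditions
    (T : ℝ) (hT : 0 < T) (q₀ v₀ qT vT : ℝ)
    (lamq0 lamv0 : ℝ)
    (hlamq0 : lamq0 =
      (sinh T * (qT - q₀) + (1 - cosh T) * (v₀ + vT)) /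
        (2 * (cosh T - 1) - T * sinh T))
    (hlamv0 : lamv0 = (cosh T * v₀ - vT + (cosh T - 1) * lamq0) / sinh T)
    (qstar vstar : ℝ → ℝ)
    (hqstar : qstar = fun t =>
      q₀ + sinh t * v₀ + (sinh t - t) * lamq0 + (1 - cosh t) * lamv0)
    (hvstar : vstar = fun t =>
      cosh t * v₀ + (cosh t - 1) * lamq0 - sinh t * lamv0) :
    qstar T = qT ∧ vstar T = vT := by
  have hs : 0 < sinh T := Real.sinh_pos_iff.mpr hT
  have hsne : sinh T ≠ 0 := ne_of_gt hs
  have hs2 : 0 < sinh (T / 2) := Real.sinh_pos_iff.mpr (by linarith)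
  have hkey : sinh (T / 2) < (T / 2) * cosh (T / 2) := sinh_lt_mul_cosh (by linarith)
  have hcs : cosh T ^ 2 - sinh T ^ 2 = 1 := Real.cosh_sq_sub_sinh_sq T
  have hD : 2 * (cosh T - 1) - T * sinh T < 0 := by
    have hc : cosh T = 2 * sinh (T / 2) ^ 2 + 1 := by
      have h2 : cosh (2 * (T / 2)) = cosh (T / 2) ^ 2 + sinh (T / 2) ^ 2 :=
        Real.cosh_two_mul (T / 2)
      rw [show (2 : ℝ) * (T / 2) = T by ring] at h2
      nlinarith [Real.cosh_sq_sub_sinh_sq (T / 2)]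
    have hsT : sinh T = 2 * sinh (T / 2) * cosh (T / 2) := by
      have h2 := Real.sinh_two_mul (T / 2)
      rw [show (2 : ℝ) * (T / 2) = T by ring] at h2
      linarith
    rw [hc, hsT]
    nlinarith
  have hDne : 2 * (cosh T - 1) - T * sinh T ≠ 0 := ne_of_lt hD
  have h1 : sinh T * lamv0 = cosh T * v₀ - vT + (cosh T - 1) * lamq0 := by
    rw [hlamv0]; field_simp
  have h2 : (2 * (cosh T - 1) - T * sinh T) * lamq0 =
      sinh T * (qT - q₀) + (1 - cosh T) * (v₀ + vT) := by
    rw [hlamq0]; field_simp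
  constructor
  · rw [hqstar]
    simp only
    have : sinh T * (q₀ + sinh T * v₀ + (sinh T - T) * lamq0 + (1 - cosh T) * lamv0)
        = sinh T * qT := by
      linear_combination (1 - cosh T) * h1 + h2 - (lamq0 + v₀) * hcs
    exact mul_left_cancel₀ hsne this
  · rw [hvstar]
    simp only
    linear_combination -h1
end

section
/- Let T > 0 and q₀, v₀, q_T, v_T ∈ ℝ, and define λ_q0 := (sinh T · (q_T − q₀) + (1 − cosh T)(v₀ + v_T)) / (2(cosh T − 1) − T sinh T), λ_v0 := (cosh T · v₀ − v_T + (cosh T − 1) λ_q0) / sinh T, and v⋆(t) := cosh t · v₀ + (cosh t − 1) λ_q0 − sinh t · λ_v0. Then for all t ∈ ℝ, v⋆(t) = [(sinh t + sinh(T − t) − sinh T) / (2(cosh T − 1) − T sinh T)] (q_T − q₀) + (sinh(T − t) v₀ + sinh t · v_T) / sinh T + (1 − cosh T)(sinh(T − t) − sinh T + sinh t)(v₀ + v_T) / (sinh T · (2(cosh T − 1) − T sinh T)). (Decomposition of the optimal velocity trajectory of the double integrator into the turnpike factor term, the incoming/leaving arc term, and the velocity boundary correction term.) -/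
open Real

lemma two_cosh_lt {T : ℝ} (hT : 0 < T) : 2 * (cosh T - 1) < T * sinh T := by
  have h : StrictMonoOn (fun x : ℝ => x * sinh x - 2 * cosh x) (Set.Ici 0) := by
    refine strictMonoOn_of_deriv_pos (convex_Ici _)
      (Continuous.continuousOn (by continuity)) fun y hy => ?_
    rw [interior_Ici, Set.mem_Ioi] at hy
    have : HasDerivAt (fun x : ℝ => x * sinh x - 2 * cosh x)
        (1 * sinh y + y * cosh y - 2 * sinh y) y :=
      ((hasDerivAt_id y).mul (Real.hasDerivAt_sinh y)).sub
        ((Real.hasDerivAt_cosh y).const_mul 2)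
    rw [this.deriv]
    have := sinh_lt_mul_cosh hy
    nlinarith
  have := h (Set.self_mem_Ici) (Set.mem_Ici.mpr hT.le) hT
  simp at this
  linarith

/-- decomposition of the optimal velocity trajectory of the double
integrator into the turnpike factor term, the incoming/leaving arc term, and the
velocity boundary correction term. -/
theorem double_integrator_velocity_decomposition
    (T : ℝ) (hT : 0 < T) (q₀ v₀ qT vT : ℝ)
    (lamq0 lamv0 : ℝ)
    (hlamq0 : lamq0 =
      (sinh T * (qT - q₀) + (1 - cosh T) * (v₀ + vT)) /
        (2 * (cosh T - 1) - T * sinh T))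
    (hlamv0 : lamv0 = (cosh T * v₀ - vT + (cosh T - 1) * lamq0) / sinh T)
    (vstar : ℝ → ℝ)
    (hvstar : vstar = fun t =>
      cosh t * v₀ + (cosh t - 1) * lamq0 - sinh t * lamv0) :
    ∀ t : ℝ,
      vstar t =
        ((sinh t + sinh (T - t) - sinh T) /
            (2 * (cosh T - 1) - T * sinh T)) * (qT - q₀) +
        (sinh (T - t) * v₀ + sinh t * vT) / sinh T +
        (1 - cosh T) * (sinh (T - t) - sinh T + sinh t) * (v₀ + vT) /
          (sinh T * (2 * (cosh T - 1) - T * sinh T)) := by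
  have hs : sinh T ≠ 0 := (Real.sinh_pos_iff.mpr hT).ne'
  have hD : 2 * (cosh T - 1) - T * sinh T ≠ 0 := by
    have := two_cosh_lt hT; linarith
  intro t
  subst hvstar hlamv0 hlamq0
  simp only [Real.sinh_sub]
  field_simp
  ring
end

section
/- Let q₀, v₀, q_T, v_T ∈ ℝ and for T > 0 define λ_q0(T) := (sinh T · (q_T − q₀) + (1 − cosh T)(v₀ + v_T)) / (2(cosh T − 1) − T sinh T). Then there exists T₀ > 0 such that for all T ≥ T₀, T · |λ_q0(T)| ≤ 2 (|q_T − q₀| + |v₀ + v_T|). (The adjoint variable λ_q of the double integrator optimal control problem is O(1/T) uniformly for boundary data in a bounded set.) -/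
open Real

/-- the adjoint variable `λ_q` of the double integrator optimal control
problem is `O(1/T)`: there is `T₀ > 0` such that for all `T ≥ T₀`,
`T |λ_q0(T)| ≤ 2(|q_T − q₀| + |v₀ + v_T|)`. -/
theorem adjoint_lamq_O_one_div_T
    (q₀ v₀ qT vT : ℝ)
    (lamq0 : ℝ → ℝ)
    (hlamq0 : ∀ T : ℝ, 0 < T → lamq0 T =
      (sinh T * (qT - q₀) + (1 - cosh T) * (v₀ + vT)) /
        (2 * (cosh T - 1) - T * sinh T)) :
    ∃ T₀ > (0 : ℝ), ∀ T ≥ T₀,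
      T * |lamq0 T| ≤ 2 * (|qT - q₀| + |v₀ + vT|) := by
  refine ⟨5, by norm_num, fun T hT => ?_⟩
  have hT0 : (0:ℝ) < T := by linarith
  rw [hlamq0 T hT0]
  set A := qT - q₀
  set B := v₀ + vT
  have hTs : T ≤ sinh T := (Real.self_lt_sinh_iff.mpr hT0).le
  have hs5 : (5:ℝ) ≤ sinh T := le_trans hT hTs
  have hc1 : (1:ℝ) ≤ cosh T := Real.one_le_cosh T
  have hcs : cosh T ≤ sinh T + 1 := by
    have := Real.cosh_sq T
    nlinarith [Real.sinh_nonneg_iff.mpr hT0.le]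
  have hD : 0 < T * sinh T - 2 * (cosh T - 1) := by nlinarith
  rw [abs_div]
  have hden : |2 * (cosh T - 1) - T * sinh T| = T * sinh T - 2 * (cosh T - 1) := by
    rw [abs_of_neg (by linarith)]; ring
  rw [hden, mul_div_assoc' , div_le_iff₀ hD]
  have hN : |sinh T * A + (1 - cosh T) * B| ≤ sinh T * |A| + (cosh T - 1) * |B| := by
    calc |sinh T * A + (1 - cosh T) * B| ≤ |sinh T * A| + |(1 - cosh T) * B| := abs_add_le _ _
      _ = sinh T * |A| + (cosh T - 1) * |B| := by
          rw [abs_mul, abs_mul, abs_of_nonneg (by linarith : (0:ℝ) ≤ sinh T),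
            abs_of_nonpos (by linarith : 1 - cosh T ≤ 0)]
          ring
  have hA : (0:ℝ) ≤ |A| := abs_nonneg _
  have hB : (0:ℝ) ≤ |B| := abs_nonneg _
  have key : T * (sinh T * |A| + (cosh T - 1) * |B|) ≤
      2 * (|A| + |B|) * (T * sinh T - 2 * (cosh T - 1)) := by
    have h1 : 4 * cosh T ≤ T * sinh T + 4 := by nlinarith
    have h2 : T * (cosh T - 1) ≤ T * sinh T := by nlinarith
    nlinarith [mul_le_mul_of_nonneg_left h2 hB,
      mul_le_mul_of_nonneg_left h1 hA, mul_le_mul_of_nonneg_left h1 hB]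
  calc T * |sinh T * A + (1 - cosh T) * B| ≤ T * (sinh T * |A| + (cosh T - 1) * |B|) :=
        mul_le_mul_of_nonneg_left hN hT0.le
    _ ≤ 2 * (|A| + |B|) * (T * sinh T - 2 * (cosh T - 1)) := key
end
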